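/- Fix N ∈ ℕ, real parameters p_1,…,p_N > 0, and a_1,…,a_N, r_1,…,r_N ∈ ℝ. Define η_j(x, y, t, t') = 2 p_j x + 2 p_j³ t' + r_j y + r_j p_j² t and the N-soliton tau function τ_N(x, y, t, t') = Σ_{S ⊆ {1,…,N}} [ Π_{i<j, i,j∈S} ((p_i − p_j)/(p_i + p_j))² ] · Π_{j∈S} a_j exp(η_j(x, y, t, t')). Then τ_N satisfies the Hirota bilinear equation (D_x⁴ − 4 D_x D_{t'}) τ_N·τ_N = 0 identically on ℝ⁴. -/

import Mathlib

noncomputable section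


/-- Partial derivative in coordinate direction `i` of a function on `Fin 4 → ℝ`. -/
def pd (i : Fin 4) (F : (Fin 4 → ℝ) → ℝ) : (Fin 4 → ℝ) → ℝ :=
  fun q => fderiv ℝ F q (Pi.single i 1)

/-- Iterated partial derivatives along a list of coordinate directions. -/
def pdList : List (Fin 4) → ((Fin 4 → ℝ) → ℝ) → ((Fin 4 → ℝ) → ℝ)
  | [], F => F
  | i :: js, F => pd i (pdList js F)

/-- The Hirota bilinear operator `D` along a list of coordinate directions:
`(D_{i₁} ⋯ D_{iₘ} f·g)(q) = ∂_{s_{i₁}} ⋯ ∂_{s_{iₘ}} [f(q+s) g(q−s)]` at `s = 0`. -/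
def hirotaD (idx : List (Fin 4)) (f g : (Fin 4 → ℝ) → ℝ) (q : Fin 4 → ℝ) : ℝ :=
  pdList idx (fun s => f (q + s) * g (q - s)) 0

/-- The phase `η_j(x,y,t,t') = 2 p_j x + 2 p_j³ t' + r_j y + r_j p_j² t`,
with coordinates `q 0 = x`, `q 1 = y`, `q 2 = t`, `q 3 = t'`. -/
def eta {N : ℕ} (p r : Fin N → ℝ) (j : Fin N) (q : Fin 4 → ℝ) : ℝ :=
  2 * p j * q 0 + 2 * (p j) ^ 3 * q 3 + r j * q 1 + r j * (p j) ^ 2 * q 2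

/-- The `N`-soliton tau function of the (2+1)-dimensional KdV hierarchy. -/
def tauN {N : ℕ} (p a r : Fin N → ℝ) (q : Fin 4 → ℝ) : ℝ :=
  ∑ S : Finset (Fin N),
    (∏ i ∈ S, ∏ j ∈ S.filter (fun j => i < j), ((p i - p j) / (p i + p j)) ^ 2) *
      ∏ j ∈ S, a j * Real.exp (eta p r j q)


namespace KdVAux

variable {N : ℕ}

/-- sign function of a subset -/
def sgn (A : Finset (Fin N)) (i : Fin N) : ℝ := if i ∈ A then 1 else -1

lemma sgn_sq (A : Finset (Fin N)) (i : Fin N) : sgn A i ^ 2 = 1 := by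
  unfold sgn; split <;> norm_num

lemma sgn_cube (A : Finset (Fin N)) (i : Fin N) : sgn A i ^ 3 = sgn A i := by
  unfold sgn; split <;> norm_num

def pairProd (S : Finset (Fin N)) (f : Fin N → Fin N → ℝ) : ℝ :=
  ∏ i ∈ S, ∏ j ∈ S.filter (fun j => i < j), f i j

lemma pairProd_empty (f : Fin N → Fin N → ℝ) : pairProd ∅ f = 1 := by
  simp [pairProd]

lemma pairProd_insert {f : Fin N → Fin N → ℝ} (hsym : ∀ i j, f i j = f j i)
    {d : Fin N} {S : Finset (Fin N)} (hd : d ∉ S) :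
    pairProd (insert d S) f = (∏ i ∈ S, f d i) * pairProd S f := by
  classical
  unfold pairProd
  rw [Finset.prod_insert hd]
  have h1 : (insert d S).filter (fun j => d < j) = S.filter (fun j => d < j) := by
    rw [Finset.filter_insert]; simp
  have h2 : ∀ i ∈ S, ∏ j ∈ (insert d S).filter (fun j => i < j), f i j
      = (if i < d then f i d else 1) * ∏ j ∈ S.filter (fun j => i < j), f i j := by
    intro i hi
    rw [Finset.filter_insert]
    split
    · rw [Finset.prod_insert (by simp [hd])]
    · rw [one_mul]
  rw [h1, Finset.prod_congr rfl h2, Finset.prod_mul_distrib]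
  have h3 : ∏ j ∈ S.filter (fun j => d < j), f d j
      = ∏ j ∈ S, (if d < j then f d j else 1) := by
    rw [Finset.prod_filter]
  rw [h3, ← mul_assoc]
  congr 1
  rw [← Finset.prod_mul_distrib]
  apply Finset.prod_congr rfl
  intro i hi
  have hne : i ≠ d := fun h => hd (h ▸ hi)
  rcases lt_trichotomy d i with h | h | h
  · simp [h, not_lt.mpr h.le]
  · exact absurd h.symm hne
  · simp [h, not_lt.mpr h.le, hsym d i]

lemma pairProd_union {f : Fin N → Fin N → ℝ} (hsym : ∀ i j, f i j = f j i)
    {J K : Finset (Fin N)} (hJK : Disjoint J K) :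
    pairProd (J ∪ K) f = (pairProd J f * pairProd K f) * ∏ i ∈ J, ∏ j ∈ K, f i j := by
  classical
  induction J using Finset.induction_on with
  | empty => simp [pairProd_empty]
  | insert a J ha ih =>
      have haK : a ∉ K := Finset.disjoint_left.mp hJK (Finset.mem_insert_self a J)
      have hJK2 : Disjoint J K := by
        exact Finset.disjoint_of_subset_left (Finset.subset_insert a J) hJK
      have haJK : a ∉ J ∪ K := by simp [ha, haK]
      rw [Finset.insert_union, pairProd_insert hsym haJK, ih hJK2,
        pairProd_insert hsym ha, Finset.prod_insert ha, Finset.prod_union hJK2]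
      ring

lemma pairProd_congr {S : Finset (Fin N)} {f g : Fin N → Fin N → ℝ}
    (h : ∀ i ∈ S, ∀ j ∈ S, f i j = g i j) : pairProd S f = pairProd S g := by
  unfold pairProd
  refine Finset.prod_congr rfl fun i hi => Finset.prod_congr rfl fun j hj => ?_
  exact h i hi j (Finset.mem_filter.mp hj).1

lemma sgn_mem {A : Finset (Fin N)} {i : Fin N} (h : i ∈ A) : sgn A i = 1 := if_pos h
lemma sgn_not_mem {A : Finset (Fin N)} {i : Fin N} (h : i ∉ A) : sgn A i = -1 := if_neg h
lemma sgn_insert_ne {A : Finset (Fin N)} {d i : Fin N} (h : i ≠ d) :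
    sgn (insert d A) i = sgn A i := by simp [sgn, Finset.mem_insert, h]
lemma sgn_cases (A : Finset (Fin N)) (i : Fin N) : sgn A i = 1 ∨ sgn A i = -1 := by
  unfold sgn; split <;> simp

/-- the squared-difference pair function -/
def fsq (x : Fin N → ℝ) (A : Finset (Fin N)) : Fin N → Fin N → ℝ :=
  fun i j => (sgn A i * x i - sgn A j * x j) ^ 2

lemma fsq_symm (x : Fin N → ℝ) (A : Finset (Fin N)) : ∀ i j, fsq x A i j = fsq x A j i := by
  intro i j; unfold fsq; ring

/-- `E`: the signed linear sum -/
def Ee (Δ : Finset (Fin N)) (x : Fin N → ℝ) (A : Finset (Fin N)) : ℝ :=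
  ∑ i ∈ Δ, sgn A i * x i

/-- `P`: the signed cubic sum -/
def Pp (Δ : Finset (Fin N)) (x : Fin N → ℝ) (A : Finset (Fin N)) : ℝ :=
  ∑ i ∈ Δ, sgn A i * (x i) ^ 3

def keyTerm (Δ : Finset (Fin N)) (x : Fin N → ℝ) (A : Finset (Fin N)) : ℝ :=
  pairProd Δ (fsq x A) * ((Ee Δ x A) ^ 4 - Ee Δ x A * Pp Δ x A)

def keyLHS (Δ : Finset (Fin N)) (x : Fin N → ℝ) : ℝ :=
  ∑ A ∈ Δ.powerset, keyTerm Δ x A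

lemma keyLHS_empty (x : Fin N → ℝ) : keyLHS ∅ x = 0 := by
  simp [keyLHS, keyTerm, Ee, Pp]

lemma keyLHS_singleton (d : Fin N) (x : Fin N → ℝ) : keyLHS {d} x = 0 := by
  have h : ∀ A : Finset (Fin N), keyTerm {d} x A = 0 := by
    intro A
    have hE : ((sgn A d * x d) ^ 4 - (sgn A d * x d) * (sgn A d * (x d) ^ 3)) = 0 := by
      rcases sgn_cases A d with h | h <;> rw [h] <;> ring
    unfold keyTerm Ee Pp
    rw [Finset.sum_singleton, Finset.sum_singleton, hE, mul_zero]
  simp [keyLHS, h]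

open Polynomial in
lemma coeff_comp_neg_X (p : ℝ[X]) (k : ℕ) : (p.comp (-X)).coeff k = (-1) ^ k * p.coeff k := by
  induction p using Polynomial.induction_on' with
  | add p q hp hq => simp [add_comp, coeff_add, hp, hq, mul_add]
  | monomial n a =>
      have h1 : ((-X : ℝ[X])) ^ n = C ((-1) ^ n) * X ^ n := by
        rw [neg_pow, ← C_1, ← C_neg, ← C_pow]
      rw [← Polynomial.C_mul_X_pow_eq_monomial, mul_comp, C_comp, pow_comp, X_comp, h1,
        ← mul_assoc, ← C_mul, coeff_C_mul, coeff_C_mul, coeff_X_pow]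
      by_cases h : k = n
      · subst h; simp [mul_comm]
      · simp [Ne.symm h, h]

open Polynomial

variable (Δ' : Finset (Fin N)) (x : Fin N → ℝ) (A : Finset (Fin N))

/-- the one-variable polynomial attached to a sign pattern `A` on `Δ'` -/
def Fpoly : ℝ[X] :=
  C (pairProd Δ' (fsq x A)) * (∏ i ∈ Δ', (X - C (sgn A i * x i))) ^ 2 *
    (C (3 * Ee Δ' x A) * X ^ 3 + C (6 * (Ee Δ' x A) ^ 2) * X ^ 2 +
      C (4 * (Ee Δ' x A) ^ 3 - Pp Δ' x A) * X +
      C ((Ee Δ' x A) ^ 4 - Ee Δ' x A * Pp Δ' x A))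

lemma eval_Fpoly (t : ℝ) :
    eval t (Fpoly Δ' x A) =
      pairProd Δ' (fsq x A) * (∏ i ∈ Δ', (t - sgn A i * x i) ^ 2) *
        ((t + Ee Δ' x A) ^ 4 - (t + Ee Δ' x A) * (t ^ 3 + Pp Δ' x A)) := by
  unfold Fpoly
  rw [eval_mul, eval_mul, eval_C, eval_pow, eval_prod]
  simp only [eval_add, eval_mul, eval_C, eval_pow, eval_X, eval_sub]
  rw [← Finset.prod_pow]
  ring

lemma coeff_mul_C_mul_X_pow (p : ℝ[X]) (a : ℝ) (k m : ℕ) :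
    (p * (C a * X ^ k)).coeff m = a * (if k ≤ m then p.coeff (m - k) else 0) := by
  have h : p * (C a * X ^ k) = C a * (p * X ^ k) := by ring
  rw [h, coeff_C_mul, coeff_mul_X_pow']

section FpolyFacts

variable {Δ' : Finset (Fin N)} {x : Fin N → ℝ} {A : Finset (Fin N)}

lemma P1_monic : (∏ i ∈ Δ', (X - C (sgn A i * x i))).Monic :=
  monic_prod_of_monic _ _ fun i _ => monic_X_sub_C _

lemma P1_natDegree : (∏ i ∈ Δ', (X - C (sgn A i * x i))).natDegree = Δ'.card := by
  rw [natDegree_prod_of_monic _ _ fun i _ => monic_X_sub_C _]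
  simp only [natDegree_X_sub_C, Finset.sum_const, smul_eq_mul, mul_one]

lemma Q1_natDegree : ((∏ i ∈ Δ', (X - C (sgn A i * x i))) ^ 2).natDegree = 2 * Δ'.card := by
  rw [P1_monic.natDegree_pow, P1_natDegree]

lemma Q1_coeff_top : ((∏ i ∈ Δ', (X - C (sgn A i * x i))) ^ 2).coeff (2 * Δ'.card) = 1 := by
  have := (P1_monic (Δ' := Δ') (x := x) (A := A)).pow 2
  have h := this.coeff_natDegree
  rwa [Q1_natDegree] at h

lemma Q1_coeff_next (hn : 1 ≤ Δ'.card) :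
    ((∏ i ∈ Δ', (X - C (sgn A i * x i))) ^ 2).coeff (2 * Δ'.card - 1) = -2 * Ee Δ' x A := by
  have h1 : ((∏ i ∈ Δ', (X - C (sgn A i * x i))) ^ 2).nextCoeff
      = 2 • (∏ i ∈ Δ', (X - C (sgn A i * x i))).nextCoeff := P1_monic.nextCoeff_pow 2
  rw [prod_X_sub_C_nextCoeff] at h1
  have h2 : 0 < ((∏ i ∈ Δ', (X - C (sgn A i * x i))) ^ 2).natDegree := by
    rw [Q1_natDegree]; omega
  have h3 := nextCoeff_of_natDegree_pos h2
  rw [Q1_natDegree] at h3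
  rw [← h3, h1]
  unfold Ee
  push_cast
  ring

lemma Q1_coeff_gt {k : ℕ} (hk : 2 * Δ'.card < k) :
    ((∏ i ∈ Δ', (X - C (sgn A i * x i))) ^ 2).coeff k = 0 := by
  apply coeff_eq_zero_of_natDegree_lt
  rwa [Q1_natDegree]

lemma natDegree_Fpoly_le : (Fpoly Δ' x A).natDegree ≤ 2 * Δ'.card + 3 := by
  unfold Fpoly
  apply le_trans (natDegree_mul_le)
  have h1 : (C (pairProd Δ' (fsq x A)) * (∏ i ∈ Δ', (X - C (sgn A i * x i))) ^ 2).natDegree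
      ≤ 2 * Δ'.card := le_trans (natDegree_C_mul_le _ _) (le_of_eq Q1_natDegree)
  have hg : (C (3 * Ee Δ' x A) * X ^ 3 + C (6 * (Ee Δ' x A) ^ 2) * X ^ 2 +
      C (4 * (Ee Δ' x A) ^ 3 - Pp Δ' x A) * X +
      C ((Ee Δ' x A) ^ 4 - Ee Δ' x A * Pp Δ' x A)).natDegree ≤ 3 := by
    apply le_trans (natDegree_add_le _ _)
    apply max_le ?_ (by rw [natDegree_C]; omega)
    apply le_trans (natDegree_add_le _ _)
    apply max_le ?_ (le_trans (natDegree_C_mul_le _ _) (by simp))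
    apply le_trans (natDegree_add_le _ _)
    apply max_le (le_trans (natDegree_C_mul_le _ _) (by simp))
      (le_trans (natDegree_C_mul_le _ _) (by simp))
  omega

lemma coeff_Fpoly_top (hn : 1 ≤ Δ'.card) : (Fpoly Δ' x A).coeff (2 * Δ'.card + 2) = 0 := by
  unfold Fpoly
  set W := pairProd Δ' (fsq x A) with hW
  set E := Ee Δ' x A with hE
  set P := Pp Δ' x A with hP
  set q := C W * (∏ i ∈ Δ', (X - C (sgn A i * x i))) ^ 2 with hq
  have hq1 : q.coeff (2 * Δ'.card) = W := by rw [hq, coeff_C_mul, Q1_coeff_top, mul_one]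
  have hq2 : q.coeff (2 * Δ'.card - 1) = W * (-2 * E) := by
    rw [hq, coeff_C_mul, Q1_coeff_next hn]
  have hq3 : ∀ k, 2 * Δ'.card < k → q.coeff k = 0 := by
    intro k hk; rw [hq, coeff_C_mul, Q1_coeff_gt hk, mul_zero]
  rw [mul_add, mul_add, mul_add, coeff_add, coeff_add, coeff_add]
  rw [coeff_mul_C_mul_X_pow, coeff_mul_C_mul_X_pow, show (X : ℝ[X]) = X ^ 1 by rw [pow_one],
    coeff_mul_C_mul_X_pow, coeff_mul_C]
  have e3 : 2 * Δ'.card + 2 - 3 = 2 * Δ'.card - 1 := by omega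
  have e2 : 2 * Δ'.card + 2 - 2 = 2 * Δ'.card := by omega
  rw [if_pos (by omega : 3 ≤ 2 * Δ'.card + 2), if_pos (by omega : 2 ≤ 2 * Δ'.card + 2),
    if_pos (by omega : 1 ≤ 2 * Δ'.card + 2), e3, e2, hq1, hq2,
    hq3 _ (by omega), hq3 _ (by omega)]
  ring

end FpolyFacts

section EvalCorrespondence

variable {d : Fin N} {Δ' A' : Finset (Fin N)} {x : Fin N → ℝ}

lemma Ee_congr {Δ : Finset (Fin N)} {y z : Fin N → ℝ} {A B : Finset (Fin N)}
    (h : ∀ i ∈ Δ, sgn A i * y i = sgn B i * z i) : Ee Δ y A = Ee Δ z B :=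
  Finset.sum_congr rfl h

lemma Pp_congr {Δ : Finset (Fin N)} {y z : Fin N → ℝ} {A B : Finset (Fin N)}
    (h : ∀ i ∈ Δ, sgn A i * y i = sgn B i * z i) : Pp Δ y A = Pp Δ z B := by
  refine Finset.sum_congr rfl fun i hi => ?_
  have e1 : sgn A i * (y i) ^ 3 = (sgn A i * y i) ^ 3 := by
    rcases sgn_cases A i with h1 | h1 <;> rw [h1] <;> ring
  have e2 : sgn B i * (z i) ^ 3 = (sgn B i * z i) ^ 3 := by
    rcases sgn_cases B i with h1 | h1 <;> rw [h1] <;> ring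
  rw [e1, e2, h i hi]

lemma fsq_congr {Δ : Finset (Fin N)} {y z : Fin N → ℝ} {A B : Finset (Fin N)}
    (h : ∀ i ∈ Δ, sgn A i * y i = sgn B i * z i) :
    ∀ i ∈ Δ, ∀ j ∈ Δ, fsq y A i j = fsq z B i j := by
  intro i hi j hj; unfold fsq; rw [h i hi, h j hj]

lemma keyTerm_update_insert (hd : d ∉ Δ') (hA : A' ⊆ Δ') (t : ℝ) :
    keyTerm (insert d Δ') (Function.update x d t) (insert d A') = eval t (Fpoly Δ' x A') := by
  set x' := Function.update x d t with hx'
  set A := insert d A' with hAdef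
  have hcong : ∀ i ∈ Δ', sgn A i * x' i = sgn A' i * x i := by
    intro i hi
    have hne : i ≠ d := fun h => hd (h ▸ hi)
    rw [hAdef, sgn_insert_ne hne, hx', Function.update_of_ne hne]
  have hsgnd : sgn A d = 1 := sgn_mem (Finset.mem_insert_self d A')
  have hxd : x' d = t := Function.update_self d t x
  have hprod : pairProd (insert d Δ') (fsq x' A)
      = (∏ i ∈ Δ', (t - sgn A' i * x i) ^ 2) * pairProd Δ' (fsq x A') := by
    rw [pairProd_insert (fsq_symm x' A) hd,
      pairProd_congr (fun i hi j hj => fsq_congr hcong i hi j hj)]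
    congr 1
    refine Finset.prod_congr rfl fun i hi => ?_
    unfold fsq
    rw [hcong i hi, hsgnd, hxd, one_mul]
  have hE : Ee (insert d Δ') x' A = t + Ee Δ' x A' := by
    rw [Ee, Finset.sum_insert hd, hsgnd, hxd, one_mul]
    congr 1
    exact Ee_congr hcong
  have hP : Pp (insert d Δ') x' A = t ^ 3 + Pp Δ' x A' := by
    rw [Pp, Finset.sum_insert hd, hsgnd, hxd, one_mul]
    congr 1
    exact Pp_congr hcong
  rw [keyTerm, hprod, hE, hP, eval_Fpoly]
  ring

lemma keyTerm_update_not_mem (hd : d ∉ Δ') (hA : A' ⊆ Δ') (t : ℝ) :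
    keyTerm (insert d Δ') (Function.update x d t) A' = eval (-t) (Fpoly Δ' x A') := by
  set x' := Function.update x d t with hx'
  have hdA : d ∉ A' := fun h => hd (hA h)
  have hcong : ∀ i ∈ Δ', sgn A' i * x' i = sgn A' i * x i := by
    intro i hi
    have hne : i ≠ d := fun h => hd (h ▸ hi)
    rw [hx', Function.update_of_ne hne]
  have hsgnd : sgn A' d = -1 := sgn_not_mem hdA
  have hxd : x' d = t := Function.update_self d t x
  have hprod : pairProd (insert d Δ') (fsq x' A')
      = (∏ i ∈ Δ', (-t - sgn A' i * x i) ^ 2) * pairProd Δ' (fsq x A') := by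
    rw [pairProd_insert (fsq_symm x' A') hd,
      pairProd_congr (fun i hi j hj => fsq_congr hcong i hi j hj)]
    congr 1
    refine Finset.prod_congr rfl fun i hi => ?_
    unfold fsq
    rw [hcong i hi, hsgnd, hxd]
    ring
  have hE : Ee (insert d Δ') x' A' = -t + Ee Δ' x A' := by
    rw [Ee, Finset.sum_insert hd, hsgnd, hxd]
    have := Ee_congr hcong
    rw [Ee] at this
    rw [this]
    ring_nf
  have hP : Pp (insert d Δ') x' A' = -t ^ 3 + Pp Δ' x A' := by
    rw [Pp, Finset.sum_insert hd, hsgnd, hxd]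
    have := Pp_congr hcong
    rw [Pp] at this
    rw [this]
    ring_nf
  rw [keyTerm, hprod, hE, hP, eval_Fpoly]
  ring

end EvalCorrespondence

section Roots

variable {d e : Fin N} {Δ' Δ'' : Finset (Fin N)} {x : Fin N → ℝ}

lemma eval_zero_Fpoly {A' : Finset (Fin N)} :
    eval 0 (Fpoly Δ' x A') = (∏ i ∈ Δ', (x i) ^ 2) * keyTerm Δ' x A' := by
  rw [eval_Fpoly]
  have h : ∏ i ∈ Δ', (0 - sgn A' i * x i) ^ 2 = ∏ i ∈ Δ', (x i) ^ 2 := by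
    refine Finset.prod_congr rfl fun i _ => ?_
    rcases sgn_cases A' i with h | h <;> rw [h] <;> ring
  rw [h, keyTerm]
  ring

lemma keyLHS_update_zero (hd : d ∉ Δ') :
    keyLHS (insert d Δ') (Function.update x d 0) = 2 * (∏ i ∈ Δ', (x i) ^ 2) * keyLHS Δ' x := by
  rw [keyLHS, Finset.sum_powerset_insert hd, ← Finset.sum_add_distrib, keyLHS, Finset.mul_sum]
  refine Finset.sum_congr rfl fun A' hA' => ?_
  have hA : A' ⊆ Δ' := Finset.mem_powerset.mp hA'
  rw [keyTerm_update_insert hd hA 0, keyTerm_update_not_mem hd hA 0, neg_zero,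
    eval_zero_Fpoly]
  ring

/-- general expansion of a `keyTerm` over a set with two distinguished elements -/
lemma keyTerm_dd (hd : d ∉ insert e Δ'') (he : e ∉ Δ'') (y : Fin N → ℝ) (A : Finset (Fin N)) :
    keyTerm (insert d (insert e Δ'')) y A =
      (fsq y A d e * ((∏ i ∈ Δ'', fsq y A d i) * (∏ i ∈ Δ'', fsq y A e i))) *
        pairProd Δ'' (fsq y A) *
        ((sgn A d * y d + sgn A e * y e + Ee Δ'' y A) ^ 4 -
          (sgn A d * y d + sgn A e * y e + Ee Δ'' y A) *
            (sgn A d * (y d) ^ 3 + sgn A e * (y e) ^ 3 + Pp Δ'' y A)) := by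
  rw [keyTerm, pairProd_insert (fsq_symm y A) hd, pairProd_insert (fsq_symm y A) he,
    Finset.prod_insert he, Ee, Finset.sum_insert hd, Finset.sum_insert he,
    Pp, Finset.sum_insert hd, Finset.sum_insert he]
  have e1 : sgn A d * (y d) ^ 3 = (sgn A d) * y d ^ 3 := rfl
  rw [← Ee, ← Pp]
  ring

lemma keyTerm_root_kill (hd : d ∉ insert e Δ'') (he'' : e ∉ Δ'') (hde : d ≠ e)
    {A : Finset (Fin N)} {c : ℝ}
    (hkill : sgn A d * c = sgn A e) :
    keyTerm (insert d (insert e Δ'')) (Function.update x d (c * x e)) A = 0 := by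
  set y := Function.update x d (c * x e) with hy
  have hyd : y d = c * x e := Function.update_self _ _ _
  have hye : y e = x e := Function.update_of_ne (Ne.symm hde) _ _
  have h0 : fsq y A d e = 0 := by
    unfold fsq
    rw [hyd, hye, ← mul_assoc, hkill]
    ring
  rw [keyTerm_dd hd he'', h0]
  ring

lemma keyTerm_root_survive (hd : d ∉ insert e Δ'') (he'' : e ∉ Δ'') (hde : d ≠ e)
    (hdΔ : d ∉ Δ'') {A A'' : Finset (Fin N)} (hres : ∀ i ∈ Δ'', sgn A i = sgn A'' i)
    {c : ℝ} (hc : c = 1 ∨ c = -1)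
    (hsurv : sgn A d * c = - sgn A e) :
    keyTerm (insert d (insert e Δ'')) (Function.update x d (c * x e)) A =
      4 * ((x e) ^ 2 * ∏ i ∈ Δ'', ((x e) ^ 2 - (x i) ^ 2) ^ 2) * keyTerm Δ'' x A'' := by
  set y := Function.update x d (c * x e) with hy
  have hyd : y d = c * x e := Function.update_self _ _ _
  have hye : y e = x e := Function.update_of_ne (Ne.symm hde) _ _
  have hyi : ∀ i ∈ Δ'', y i = x i := by
    intro i hi
    have : i ≠ d := by rintro rfl; exact hdΔ hi
    exact Function.update_of_ne this _ _
  have hcong : ∀ i ∈ Δ'', sgn A i * y i = sgn A'' i * x i := by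
    intro i hi; rw [hres i hi, hyi i hi]
  -- the d-e pair factor
  have h1 : fsq y A d e = 4 * (x e) ^ 2 := by
    unfold fsq
    rw [hyd, hye, ← mul_assoc, hsurv]
    rcases sgn_cases A e with h | h <;> rw [h] <;> ring
  -- the paired cross factors
  have h2 : (∏ i ∈ Δ'', fsq y A d i) * (∏ i ∈ Δ'', fsq y A e i)
      = ∏ i ∈ Δ'', ((x e) ^ 2 - (x i) ^ 2) ^ 2 := by
    rw [← Finset.prod_mul_distrib]
    refine Finset.prod_congr rfl fun i hi => ?_
    unfold fsq
    rw [hyd, hye, hcong i hi, ← mul_assoc, hsurv]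
    rcases sgn_cases A e with h | h <;> rcases sgn_cases A'' i with h' | h' <;>
      rw [h, h'] <;> ring
  -- the inner pair product
  have h3 : pairProd Δ'' (fsq y A) = pairProd Δ'' (fsq x A'') :=
    pairProd_congr (fun i hi j hj => fsq_congr hcong i hi j hj)
  -- the linear sums
  have hE : sgn A d * y d + sgn A e * y e = 0 := by
    rw [hyd, hye, ← mul_assoc, hsurv]; ring
  have hP : sgn A d * (y d) ^ 3 + sgn A e * (y e) ^ 3 = 0 := by
    rw [hyd, hye]
    have hc3 : c ^ 3 = c := by rcases hc with h | h <;> rw [h] <;> ring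
    have : sgn A d * (c * x e) ^ 3 = (sgn A d * c) * (x e) ^ 3 := by
      rw [mul_pow, hc3]; ring
    rw [this, hsurv]; ring
  have hE' : Ee Δ'' y A = Ee Δ'' x A'' := Ee_congr hcong
  have hP' : Pp Δ'' y A = Pp Δ'' x A'' := Pp_congr hcong
  rw [keyTerm_dd hd he'', h1, h2, h3, hE', hP', hE, hP, keyTerm]
  ring

end Roots

section RootAssembly

variable {d e : Fin N} {Δ' : Finset (Fin N)} {x : Fin N → ℝ}

lemma keyLHS_update_root (hd : d ∉ Δ') (he : e ∈ Δ') {c : ℝ} (hc : c = 1 ∨ c = -1) :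
    keyLHS (insert d Δ') (Function.update x d (c * x e)) =
      8 * ((x e) ^ 2 * ∏ i ∈ Δ'.erase e, ((x e) ^ 2 - (x i) ^ 2) ^ 2) *
        keyLHS (Δ'.erase e) x := by
  classical
  set Δ'' := Δ'.erase e with hΔ''
  have he'' : e ∉ Δ'' := Finset.notMem_erase e Δ'
  have heq : insert e Δ'' = Δ' := Finset.insert_erase he
  have hde : d ≠ e := by rintro rfl; exact hd he
  have hdi : d ∉ insert e Δ'' := by rw [heq]; exact hd
  have hdΔ : d ∉ Δ'' := fun h => hd (Finset.erase_subset e Δ' h)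
  rw [keyLHS, ← heq, Finset.sum_powerset_insert hdi,
    Finset.sum_powerset_insert he'', Finset.sum_powerset_insert he'',
    keyLHS, Finset.mul_sum]
  rw [← Finset.sum_add_distrib, ← Finset.sum_add_distrib, ← Finset.sum_add_distrib]
  refine Finset.sum_congr rfl fun A'' hA'' => ?_
  have hsub : A'' ⊆ Δ'' := Finset.mem_powerset.mp hA''
  have hdA : d ∉ A'' := fun h => hdΔ (hsub h)
  have heA : e ∉ A'' := fun h => he'' (hsub h)
  have hdeA : d ∉ insert e A'' := by simp [hde, hdA]
  have hedA : e ∉ insert d A'' := by simp [Ne.symm hde, heA]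
  -- sign values
  have s1d : sgn A'' d = -1 := sgn_not_mem hdA
  have s1e : sgn A'' e = -1 := sgn_not_mem heA
  have s2d : sgn (insert e A'') d = -1 := sgn_not_mem hdeA
  have s2e : sgn (insert e A'') e = 1 := sgn_mem (Finset.mem_insert_self _ _)
  have s3d : sgn (insert d A'') d = 1 := sgn_mem (Finset.mem_insert_self _ _)
  have s3e : sgn (insert d A'') e = -1 := sgn_not_mem hedA
  have s4d : sgn (insert d (insert e A'')) d = 1 := sgn_mem (Finset.mem_insert_self _ _)
  have s4e : sgn (insert d (insert e A'')) e = 1 :=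
    sgn_mem (Finset.mem_insert_of_mem (Finset.mem_insert_self _ _))
  -- restrictions
  have hres1 : ∀ i ∈ Δ'', sgn A'' i = sgn A'' i := fun i _ => rfl
  have hres2 : ∀ i ∈ Δ'', sgn (insert e A'') i = sgn A'' i := by
    intro i hi
    have : i ≠ e := by rintro rfl; exact he'' hi
    exact sgn_insert_ne this
  have hres3 : ∀ i ∈ Δ'', sgn (insert d A'') i = sgn A'' i := by
    intro i hi
    have : i ≠ d := by rintro rfl; exact hdΔ hi
    exact sgn_insert_ne this
  have hres4 : ∀ i ∈ Δ'', sgn (insert d (insert e A'')) i = sgn A'' i := by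
    intro i hi
    have h1 : i ≠ d := by rintro rfl; exact hdΔ hi
    have h2 : i ≠ e := by rintro rfl; exact he'' hi
    rw [sgn_insert_ne h1, sgn_insert_ne h2]
  rcases hc with rfl | rfl
  · rw [keyTerm_root_kill hdi he'' hde (by rw [s1d, s1e]; ring),
      keyTerm_root_survive hdi he'' hde hdΔ hres2 (Or.inl rfl) (by rw [s2d, s2e]; ring),
      keyTerm_root_survive hdi he'' hde hdΔ hres3 (Or.inl rfl) (by rw [s3d, s3e]; ring),
      keyTerm_root_kill hdi he'' hde (by rw [s4d, s4e]; ring)]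
    ring
  · rw [keyTerm_root_survive hdi he'' hde hdΔ hres1 (Or.inr rfl) (by rw [s1d, s1e]; ring),
      keyTerm_root_kill hdi he'' hde (by rw [s2d, s2e]; ring),
      keyTerm_root_kill hdi he'' hde (by rw [s3d, s3e]; ring),
      keyTerm_root_survive hdi he'' hde hdΔ hres4 (Or.inr rfl) (by rw [s4d, s4e]; ring)]
    ring

end RootAssembly

section GenericCase

variable {d : Fin N} {Δ' : Finset (Fin N)} {x : Fin N → ℝ}

lemma keyLHS_update_eq_eval (hd : d ∉ Δ') (t : ℝ) :
    keyLHS (insert d Δ') (Function.update x d t) =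
      eval t (∑ A' ∈ Δ'.powerset, (Fpoly Δ' x A' + (Fpoly Δ' x A').comp (-X))) := by
  rw [eval_finset_sum, keyLHS, Finset.sum_powerset_insert hd, ← Finset.sum_add_distrib]
  refine Finset.sum_congr rfl fun A' hA' => ?_
  have hA : A' ⊆ Δ' := Finset.mem_powerset.mp hA'
  rw [eval_add, eval_comp, eval_neg, eval_X, keyTerm_update_insert hd hA,
    keyTerm_update_not_mem hd hA]
  ring

lemma natDegree_Qtot_le (hn : 1 ≤ Δ'.card) :
    (∑ A' ∈ Δ'.powerset, (Fpoly Δ' x A' + (Fpoly Δ' x A').comp (-X))).natDegree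
      ≤ 2 * Δ'.card := by
  rw [natDegree_le_iff_coeff_eq_zero]
  intro k hk
  rw [finset_sum_coeff]
  refine Finset.sum_eq_zero fun A' _ => ?_
  rw [coeff_add, coeff_comp_neg_X]
  rcases Nat.even_or_odd k with he | ho
  · have h1 : (-1 : ℝ) ^ k = 1 := he.neg_one_pow
    have h2 : (Fpoly Δ' x A').coeff k = 0 := by
      rcases eq_or_ne k (2 * Δ'.card + 2) with rfl | hne
      · exact coeff_Fpoly_top hn
      · apply coeff_eq_zero_of_natDegree_lt
        apply lt_of_le_of_lt (natDegree_Fpoly_le (Δ' := Δ') (x := x) (A := A'))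
        obtain ⟨m, rfl⟩ := he
        omega
    rw [h1, h2]; ring
  · have h1 : (-1 : ℝ) ^ k = -1 := ho.neg_one_pow
    rw [h1]; ring

lemma keyLHS_zero_of_generic {Δ : Finset (Fin N)} (hd : d ∈ Δ)
    (hn : 1 ≤ (Δ.erase d).card)
    (IH1 : keyLHS (Δ.erase d) x = 0)
    (IH2 : ∀ e ∈ Δ.erase d, keyLHS ((Δ.erase d).erase e) x = 0)
    (hgen0 : ∀ i ∈ Δ.erase d, x i ≠ 0)
    (hgen2 : ∀ i ∈ Δ.erase d, ∀ j ∈ Δ.erase d, i ≠ j → (x i) ^ 2 ≠ (x j) ^ 2) :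
    keyLHS Δ x = 0 := by
  classical
  set Δ' := Δ.erase d with hΔ'
  have hd' : d ∉ Δ' := Finset.notMem_erase d Δ
  have heq : insert d Δ' = Δ := Finset.insert_erase hd
  set Qt := ∑ A' ∈ Δ'.powerset, (Fpoly Δ' x A' + (Fpoly Δ' x A').comp (-X)) with hQt
  have h1 : ∀ t : ℝ, keyLHS Δ (Function.update x d t) = eval t Qt := by
    intro t; rw [← heq]; exact keyLHS_update_eq_eval hd' t
  set Rset : Finset ℝ := insert 0 (Δ'.image x ∪ Δ'.image fun i => -(x i)) with hRset
  have heval : ∀ y ∈ Rset, eval y Qt = 0 := by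
    intro y hy
    rw [hRset, Finset.mem_insert, Finset.mem_union] at hy
    rcases hy with rfl | hy
    · rw [← h1 0, ← heq, keyLHS_update_zero hd', IH1, mul_zero]
    · rcases hy with hy | hy
      · obtain ⟨e, he, rfl⟩ := Finset.mem_image.mp hy
        rw [← h1 (x e), ← heq, show x e = 1 * x e by ring,
          keyLHS_update_root hd' he (Or.inl rfl), IH2 e he, mul_zero]
      · obtain ⟨e, he, rfl⟩ := Finset.mem_image.mp hy
        rw [← h1 (-(x e)), ← heq, show -(x e) = (-1) * x e by ring,
          keyLHS_update_root hd' he (Or.inr rfl), IH2 e he, mul_zero]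
  have hinj1 : Set.InjOn x Δ' := by
    intro i hi j hj hij
    by_contra hne
    exact hgen2 i hi j hj hne (by rw [hij])
  have hinj2 : Set.InjOn (fun i => -(x i)) Δ' := by
    intro i hi j hj hij
    by_contra hne
    simp only [neg_inj] at hij
    exact hgen2 i hi j hj hne (by rw [hij])
  have hdisj : Disjoint (Δ'.image x) (Δ'.image fun i => -(x i)) := by
    rw [Finset.disjoint_left]
    intro y hy1 hy2
    obtain ⟨i, hi, rfl⟩ := Finset.mem_image.mp hy1
    obtain ⟨j, hj, hji⟩ := Finset.mem_image.mp hy2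
    rcases eq_or_ne i j with rfl | hne
    · exact hgen0 i hi (by linarith)
    · refine hgen2 j hj i hi (Ne.symm hne) ?_
      rw [show x i = -(x j) from hji.symm]
      ring
  have h0notin : (0 : ℝ) ∉ Δ'.image x ∪ Δ'.image fun i => -(x i) := by
    rw [Finset.mem_union]
    rintro (h | h)
    · obtain ⟨i, hi, hxi⟩ := Finset.mem_image.mp h
      exact hgen0 i hi hxi
    · obtain ⟨i, hi, hxi⟩ := Finset.mem_image.mp h
      exact hgen0 i hi (by linarith)
  have hcard : Rset.card = 2 * Δ'.card + 1 := by
    rw [hRset, Finset.card_insert_of_notMem h0notin, Finset.card_union_of_disjoint hdisj,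
      Finset.card_image_of_injOn hinj1, Finset.card_image_of_injOn hinj2]
    ring
  have hQ0 : Qt = 0 := by
    apply Polynomial.eq_zero_of_natDegree_lt_card_of_eval_eq_zero' Qt Rset heval
    rw [hcard]
    exact lt_of_le_of_lt (natDegree_Qtot_le hn) (by omega)
  have := h1 (x d)
  rw [Function.update_eq_self, hQ0, eval_zero] at this
  exact this

end GenericCase

section Density

lemma continuous_keyLHS (Δ : Finset (Fin N)) : Continuous fun x : Fin N → ℝ => keyLHS Δ x := by
  unfold keyLHS keyTerm pairProd fsq Ee Pp
  apply continuous_finset_sum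
  intro A _
  apply Continuous.mul
  · apply continuous_finset_prod
    intro i _
    apply continuous_finset_prod
    intro j _
    exact ((continuous_const.mul (continuous_apply i)).sub
      (continuous_const.mul (continuous_apply j))).pow 2
  · apply Continuous.sub
    · exact (continuous_finset_sum _ fun i _ =>
        continuous_const.mul (continuous_apply i)).pow 4
    · exact Continuous.mul
        (continuous_finset_sum _ fun i _ => continuous_const.mul (continuous_apply i))
        (continuous_finset_sum _ fun i _ => continuous_const.mul ((continuous_apply i).pow 3))

lemma dense_generic (Δ' : Finset (Fin N)) :
    Dense {x : Fin N → ℝ | (∀ i ∈ Δ', x i ≠ 0) ∧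
      ∀ i ∈ Δ', ∀ j ∈ Δ', i ≠ j → (x i) ^ 2 ≠ (x j) ^ 2} := by
  classical
  rw [Metric.dense_iff]
  intro x r hr
  set c : Fin N → ℝ := fun i => (i : ℕ) + 1 with hc
  have hcpos : ∀ i, 0 < c i := fun i => by positivity
  have hcinj : ∀ i j : Fin N, i ≠ j → c i ≠ c j := by
    intro i j hne h
    apply hne
    have h2 : ((i : ℕ) : ℝ) = ((j : ℕ) : ℝ) := by
      simp only [hc] at h; linarith
    have h3 : (i : ℕ) = (j : ℕ) := by exact_mod_cast h2
    exact Fin.val_injective h3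
  set F : Finset ℝ := ((Δ'.image fun i => -(x i) / c i)
      ∪ ((Δ' ×ˢ Δ').image fun p => (x p.2 - x p.1) / (c p.1 - c p.2)))
      ∪ ((Δ' ×ˢ Δ').image fun p => -(x p.1 + x p.2) / (c p.1 + c p.2)) with hF
  have hinf : (Set.Ioo (0 : ℝ) (r / (N + 1))).Infinite := Set.Ioo_infinite (by positivity)
  obtain ⟨δ, hδIoo, hδF⟩ := (hinf.diff F.finite_toSet).nonempty
  have hδ0 : 0 < δ := hδIoo.1
  have hδr : δ < r / (N + 1) := hδIoo.2
  set y : Fin N → ℝ := fun i => x i + δ * c i with hy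
  refine ⟨y, ?_, ?_, ?_⟩
  · -- y in the ball
    rw [Metric.mem_ball, dist_pi_lt_iff hr]
    intro b
    rw [Real.dist_eq]
    have h1 : |y b - x b| = δ * c b := by
      rw [hy]
      simp only []
      rw [show x b + δ * c b - x b = δ * c b by ring, abs_of_pos (by positivity)]
    rw [h1]
    have h2 : c b ≤ N + 1 := by
      rw [hc]
      have : (b : ℕ) < N := b.isLt
      push_cast
      linarith [show ((b:ℕ):ℝ) < (N:ℝ) by exact_mod_cast this]
    calc δ * c b ≤ δ * (N + 1) := by nlinarith
      _ < r / (N + 1) * (N + 1) := by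
          apply mul_lt_mul_of_pos_right hδr (by positivity)
      _ = r := by field_simp
  · -- nonvanishing
    intro i hi h0
    apply hδF
    have hci : c i ≠ 0 := (hcpos i).ne'
    have : δ = -(x i) / c i := by
      field_simp
      have : x i + δ * c i = 0 := h0
      linarith
    refine Finset.mem_coe.mpr ?_
    rw [hF]
    refine Finset.mem_union_left _ (Finset.mem_union_left _ ?_)
    exact Finset.mem_image.mpr ⟨i, hi, this.symm⟩
  · -- distinct squares
    intro i hi j hj hne hsq
    apply hδF
    refine Finset.mem_coe.mpr ?_
    have hfact : (y i - y j) * (y i + y j) = 0 := by nlinarith [hsq]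
    rcases mul_eq_zero.mp hfact with h | h
    · have hcc : c i - c j ≠ 0 := sub_ne_zero.mpr (hcinj i j hne)
      have hδeq : δ = (x j - x i) / (c i - c j) := by
        rw [eq_div_iff hcc]
        have : x i + δ * c i - (x j + δ * c j) = 0 := h
        ring_nf
        ring_nf at this
        linarith
      rw [hF]
      refine Finset.mem_union_left _ (Finset.mem_union_right _ ?_)
      exact Finset.mem_image.mpr ⟨(i, j), Finset.mem_product.mpr ⟨hi, hj⟩, hδeq.symm⟩
    · have hcc : c i + c j ≠ 0 := by positivity
      have hδeq : δ = -(x i + x j) / (c i + c j) := by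
        rw [eq_div_iff hcc]
        have : x i + δ * c i + (x j + δ * c j) = 0 := h
        ring_nf
        ring_nf at this
        linarith
      rw [hF]
      refine Finset.mem_union_right _ ?_
      exact Finset.mem_image.mpr ⟨(i, j), Finset.mem_product.mpr ⟨hi, hj⟩, hδeq.symm⟩

end Density

theorem keyLHS_eq_zero (Δ : Finset (Fin N)) (x : Fin N → ℝ) : keyLHS Δ x = 0 := by
  classical
  suffices H : ∀ (n : ℕ) (Δ : Finset (Fin N)), Δ.card = n → ∀ x, keyLHS Δ x = 0 from
    H _ Δ rfl x
  intro n
  induction n using Nat.strong_induction_on with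
  | _ n IH =>
    intro Δ hcard x
    rcases Nat.lt_or_ge n 2 with h2 | h2
    · interval_cases n
      · rw [Finset.card_eq_zero] at hcard
        subst hcard
        exact keyLHS_empty x
      · obtain ⟨dd, rfl⟩ := Finset.card_eq_one.mp hcard
        exact keyLHS_singleton dd x
    · have hΔne : Δ.Nonempty := by rw [← Finset.card_pos, hcard]; omega
      obtain ⟨d, hd⟩ := hΔne
      have hcard' : (Δ.erase d).card = n - 1 := by
        rw [Finset.card_erase_of_mem hd, hcard]
      have hgeneric : Set.EqOn (fun z : Fin N → ℝ => keyLHS Δ z) (fun _ => 0)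
          {z : Fin N → ℝ | (∀ i ∈ Δ.erase d, z i ≠ 0) ∧
            ∀ i ∈ Δ.erase d, ∀ j ∈ Δ.erase d, i ≠ j → (z i) ^ 2 ≠ (z j) ^ 2} := by
        rintro z ⟨hz0, hz2⟩
        refine keyLHS_zero_of_generic hd (by omega) ?_ ?_ hz0 hz2
        · exact IH (n - 1) (by omega) _ hcard' z
        · intro e he
          exact IH (n - 2) (by omega) _
            (by rw [Finset.card_erase_of_mem he, hcard']; omega) z
      have : (fun z : Fin N → ℝ => keyLHS Δ z) = fun _ => 0 :=
        Continuous.ext_on (dense_generic (Δ.erase d)) (continuous_keyLHS Δ)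
          continuous_const hgeneric
      exact congrFun this x

section Analysis

/-- the continuous linear functional `s ↦ ∑ i, m i * s i` -/
def ell (m : Fin 4 → ℝ) : (Fin 4 → ℝ) →L[ℝ] ℝ :=
  ∑ i : Fin 4, m i • (ContinuousLinearMap.proj i)

lemma ell_apply (m v : Fin 4 → ℝ) : ell m v = ∑ i, m i * v i := by
  simp [ell, ContinuousLinearMap.sum_apply, ContinuousLinearMap.proj_apply]

lemma ell_single (m : Fin 4 → ℝ) (i : Fin 4) : ell m (Pi.single i 1) = m i := by
  rw [ell_apply]
  rw [Finset.sum_eq_single i]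
  · simp
  · intro j _ hj
    simp [Pi.single_apply, hj]
  · simp

lemma hasFDeriv_sum_exp {γ : Type*} [DecidableEq γ] (U : Finset γ) (Cc : γ → ℝ)
    (m : γ → Fin 4 → ℝ) (s : Fin 4 → ℝ) :
    HasFDerivAt (fun s : Fin 4 → ℝ => ∑ u ∈ U, Cc u * Real.exp (∑ i, m u i * s i))
      (∑ u ∈ U, (Cc u * Real.exp (∑ i, m u i * s i)) • ell (m u)) s := by
  apply HasFDerivAt.fun_sum
  intro u _
  have h1 : HasFDerivAt (fun s : Fin 4 → ℝ => ∑ i, m u i * s i) (ell (m u)) s := by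
    have heq : (fun s : Fin 4 → ℝ => ∑ i, m u i * s i) = ⇑(ell (m u)) :=
      funext fun v => (ell_apply (m u) v).symm
    rw [heq]
    exact (ell (m u)).hasFDerivAt
  have h2 : HasFDerivAt (fun s : Fin 4 → ℝ => Real.exp (∑ i, m u i * s i))
      (Real.exp (∑ i, m u i * s i) • ell (m u)) s :=
    (Real.hasDerivAt_exp _).comp_hasFDerivAt s h1
  have h3 := h2.const_mul (Cc u)
  rw [smul_smul] at h3
  exact h3

lemma pd_sum_exp {γ : Type*} [DecidableEq γ] (i : Fin 4) (U : Finset γ) (Cc : γ → ℝ)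
    (m : γ → Fin 4 → ℝ) :
    pd i (fun s => ∑ u ∈ U, Cc u * Real.exp (∑ j, m u j * s j)) =
      fun s => ∑ u ∈ U, (Cc u * m u i) * Real.exp (∑ j, m u j * s j) := by
  funext s
  rw [pd, (hasFDeriv_sum_exp U Cc m s).fderiv, ContinuousLinearMap.sum_apply]
  refine Finset.sum_congr rfl fun u _ => ?_
  rw [ContinuousLinearMap.smul_apply, ell_single]
  simp only [smul_eq_mul]
  ring

lemma pdList_sum_exp {γ : Type*} [DecidableEq γ] (idx : List (Fin 4)) (U : Finset γ)
    (Cc : γ → ℝ) (m : γ → Fin 4 → ℝ) :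
    pdList idx (fun s => ∑ u ∈ U, Cc u * Real.exp (∑ j, m u j * s j)) =
      fun s => ∑ u ∈ U, (Cc u * (idx.map (m u)).prod) * Real.exp (∑ j, m u j * s j) := by
  induction idx with
  | nil => simp only [pdList, List.map_nil, List.prod_nil, mul_one]
  | cons i rest ih =>
      show pd i (pdList rest _) = _
      rw [ih, pd_sum_exp]
      funext s
      refine Finset.sum_congr rfl fun u _ => ?_
      rw [List.map_cons, List.prod_cons]
      ring

end Analysis

section Tau

variable {p a r : Fin N → ℝ}

def kvec (p r : Fin N → ℝ) (j : Fin N) : Fin 4 → ℝ :=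
  ![2 * p j, r j, r j * (p j) ^ 2, 2 * (p j) ^ 3]

def Kv (p r : Fin N → ℝ) (S : Finset (Fin N)) : Fin 4 → ℝ :=
  fun i => ∑ j ∈ S, kvec p r j i

def coefA (p : Fin N → ℝ) (S : Finset (Fin N)) : ℝ :=
  pairProd S (fun i j => ((p i - p j) / (p i + p j)) ^ 2)

def cS (p a : Fin N → ℝ) (S : Finset (Fin N)) : ℝ := coefA p S * ∏ j ∈ S, a j

lemma eta_eq (j : Fin N) (q : Fin 4 → ℝ) : eta p r j q = ∑ i, kvec p r j i * q i := by
  unfold _root_.eta kvec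
  rw [Fin.sum_univ_four]
  simp only [Matrix.cons_val_zero, Matrix.cons_val_one, Matrix.head_cons,
    Matrix.cons_val_two, Matrix.tail_cons, Matrix.cons_val_three]
  ring

lemma tauN_eq (q : Fin 4 → ℝ) :
    tauN p a r q = ∑ S : Finset (Fin N), cS p a S * Real.exp (∑ i, Kv p r S i * q i) := by
  unfold tauN cS coefA pairProd
  refine Finset.sum_congr rfl fun S _ => ?_
  rw [Finset.prod_mul_distrib, ← Real.exp_sum]
  have h : ∑ j ∈ S, eta p r j q = ∑ i, Kv p r S i * q i := by
    rw [Finset.sum_congr rfl fun j (_ : j ∈ S) => eta_eq j q, Finset.sum_comm]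
    refine Finset.sum_congr rfl fun i _ => ?_
    rw [Kv, Finset.sum_mul]
  rw [h, mul_assoc]

lemma hirotaD_tauN (idx : List (Fin 4)) (q : Fin 4 → ℝ) :
    hirotaD idx (tauN p a r) (tauN p a r) q =
      ∑ ST : Finset (Fin N) × Finset (Fin N),
        (cS p a ST.1 * cS p a ST.2 *
          Real.exp (∑ i, (Kv p r ST.1 i + Kv p r ST.2 i) * q i)) *
          (idx.map (fun i => Kv p r ST.1 i - Kv p r ST.2 i)).prod := by
  rw [hirotaD]
  have hfun : (fun s => tauN p a r (q + s) * tauN p a r (q - s)) =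
      (fun s => ∑ ST : Finset (Fin N) × Finset (Fin N),
        (cS p a ST.1 * cS p a ST.2 *
          Real.exp (∑ i, (Kv p r ST.1 i + Kv p r ST.2 i) * q i)) *
          Real.exp (∑ i, (Kv p r ST.1 i - Kv p r ST.2 i) * s i)) := by
    funext s
    rw [tauN_eq, tauN_eq, Finset.sum_mul_sum, ← Fintype.sum_prod_type']
    refine Finset.sum_congr rfl fun ST _ => ?_
    have hsum : (∑ i, Kv p r ST.1 i * (q + s) i) + (∑ i, Kv p r ST.2 i * (q - s) i)
        = (∑ i, (Kv p r ST.1 i + Kv p r ST.2 i) * q i)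
          + (∑ i, (Kv p r ST.1 i - Kv p r ST.2 i) * s i) := by
      rw [← Finset.sum_add_distrib, ← Finset.sum_add_distrib]
      refine Finset.sum_congr rfl fun i _ => ?_
      simp only [Pi.add_apply, Pi.sub_apply]
      ring
    rw [show (cS p a ST.1 * Real.exp (∑ i, Kv p r ST.1 i * (q + s) i)) *
        (cS p a ST.2 * Real.exp (∑ i, Kv p r ST.2 i * (q - s) i))
        = cS p a ST.1 * cS p a ST.2 *
          Real.exp ((∑ i, Kv p r ST.1 i * (q + s) i) + (∑ i, Kv p r ST.2 i * (q - s) i))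
        by rw [Real.exp_add]; ring]
    rw [hsum, Real.exp_add]
    ring
  rw [hfun, pdList_sum_exp]
  simp only [Pi.zero_apply, mul_zero, Finset.sum_const_zero, Real.exp_zero, mul_one]

end Tau

section Factorization

variable {p a r : Fin N → ℝ} {q : Fin 4 → ℝ}

lemma pairProd_mul (S : Finset (Fin N)) (f g : Fin N → Fin N → ℝ) :
    pairProd S (fun i j => f i j * g i j) = pairProd S f * pairProd S g := by
  unfold pairProd
  rw [← Finset.prod_mul_distrib]
  exact Finset.prod_congr rfl fun i _ => Finset.prod_mul_distrib

def Phi (p a r : Fin N → ℝ) (q : Fin 4 → ℝ) (S T : Finset (Fin N)) : ℝ :=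
  cS p a S * cS p a T * Real.exp (∑ i, (Kv p r S i + Kv p r T i) * q i) *
    ((Kv p r S 0 - Kv p r T 0) ^ 4 -
      4 * ((Kv p r S 0 - Kv p r T 0) * (Kv p r S 3 - Kv p r T 3)))

lemma signed_split {K A : Finset (Fin N)} (hA : A ⊆ K) (f : Fin N → ℝ) :
    (∑ i ∈ A, f i) - (∑ i ∈ K \ A, f i) = ∑ i ∈ K, sgn A i * f i := by
  rw [← Finset.sum_sdiff hA]
  have h1 : ∀ i ∈ A, sgn A i * f i = f i := fun i hi => by rw [sgn_mem hi, one_mul]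
  have h2 : ∀ i ∈ K \ A, sgn A i * f i = -(f i) := fun i hi => by
    rw [sgn_not_mem (Finset.mem_sdiff.mp hi).2]; ring
  rw [Finset.sum_congr rfl h2, Finset.sum_congr rfl h1, Finset.sum_neg_distrib]
  ring

lemma Kv_zero_eq (S : Finset (Fin N)) : Kv p r S 0 = ∑ j ∈ S, 2 * p j := rfl

lemma Kv_three_eq (S : Finset (Fin N)) : Kv p r S 3 = ∑ j ∈ S, 2 * (p j) ^ 3 := rfl

lemma A2_symm : ∀ i j, ((p i - p j) / (p i + p j)) ^ 2 = ((p j - p i) / (p j + p i)) ^ 2 := by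
  intro i j
  rw [show p j + p i = p i + p j by ring, div_pow, div_pow]
  congr 1
  ring

/-- the key factorization of the product of interaction coefficients over a split of `K` -/
lemma coefA_split (hp : ∀ j, 0 < p j) {K A : Finset (Fin N)} (hA : A ⊆ K) :
    pairProd K (fsq p A) =
      (coefA p A * coefA p (K \ A)) * pairProd K (fun i j => (p i + p j) ^ 2) := by
  classical
  set A2 : Fin N → Fin N → ℝ := fun i j => ((p i - p j) / (p i + p j)) ^ 2 with hA2
  set A2' : Fin N → Fin N → ℝ := fun i j => if (i ∈ A ↔ j ∈ A) then A2 i j else 1 with hA2'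
  have hplus : ∀ i j : Fin N, p i + p j ≠ 0 := fun i j => by
    have := hp i; have := hp j; positivity
  have h1 : pairProd K (fsq p A) = pairProd K (fun i j => A2' i j * (p i + p j) ^ 2) := by
    apply pairProd_congr
    intro i _ j _
    rw [hA2']
    simp only []
    by_cases hi : i ∈ A <;> by_cases hj : j ∈ A
    · rw [if_pos (by tauto), hA2]
      unfold fsq
      rw [sgn_mem hi, sgn_mem hj]
      simp only []
      rw [div_pow, div_mul_cancel₀ _ (pow_ne_zero 2 (hplus i j))]
      ring
    · rw [if_neg (by tauto)]
      unfold fsq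
      rw [sgn_mem hi, sgn_not_mem hj]
      ring
    · rw [if_neg (by tauto)]
      unfold fsq
      rw [sgn_not_mem hi, sgn_mem hj]
      ring
    · rw [if_pos (by tauto), hA2]
      unfold fsq
      rw [sgn_not_mem hi, sgn_not_mem hj]
      simp only []
      rw [div_pow, div_mul_cancel₀ _ (pow_ne_zero 2 (hplus i j))]
      ring
  have hA2'symm : ∀ i j, A2' i j = A2' j i := by
    intro i j
    rw [hA2']
    simp only []
    by_cases hi : i ∈ A <;> by_cases hj : j ∈ A
    · rw [if_pos (by tauto), if_pos (by tauto)]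
      simp only [hA2]
      exact A2_symm i j
    · rw [if_neg (by tauto), if_neg (by tauto)]
    · rw [if_neg (by tauto), if_neg (by tauto)]
    · rw [if_pos (by tauto), if_pos (by tauto)]
      simp only [hA2]
      exact A2_symm i j
  have h3 : pairProd K A2' = coefA p A * coefA p (K \ A) := by
    conv_lhs => rw [show K = A ∪ (K \ A) from (Finset.union_sdiff_of_subset hA).symm]
    rw [pairProd_union hA2'symm Finset.disjoint_sdiff]
    have e1 : pairProd A A2' = coefA p A := by
      apply pairProd_congr
      intro i hi j hj
      rw [hA2']
      simp only []
      rw [if_pos (by tauto)]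
    have e2 : pairProd (K \ A) A2' = coefA p (K \ A) := by
      apply pairProd_congr
      intro i hi j hj
      rw [Finset.mem_sdiff] at hi hj
      rw [hA2']
      simp only []
      rw [if_pos (by tauto)]
    have e3 : ∏ i ∈ A, ∏ j ∈ K \ A, A2' i j = 1 := by
      apply Finset.prod_eq_one
      intro i hi
      apply Finset.prod_eq_one
      intro j hj
      rw [Finset.mem_sdiff] at hj
      rw [hA2']
      simp only []
      rw [if_neg (by tauto)]
    rw [e1, e2, e3, mul_one]
  rw [h1, pairProd_mul, h3]

lemma pairProd_plus_pos (hp : ∀ j, 0 < p j) (K : Finset (Fin N)) :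
    0 < pairProd K (fun i j => (p i + p j) ^ 2) := by
  apply Finset.prod_pos
  intro i _
  apply Finset.prod_pos
  intro j _
  have := hp i; have := hp j
  positivity

end Factorization

section FiberSum

variable {p a r : Fin N → ℝ} {q : Fin 4 → ℝ}

lemma Kv_union {J A : Finset (Fin N)} (h : Disjoint J A) (i : Fin 4) :
    Kv p r (J ∪ A) i = Kv p r J i + Kv p r A i := Finset.sum_union h

lemma Phi_fiber_term (hp : ∀ j, 0 < p j) {J K A : Finset (Fin N)}
    (hJK : Disjoint J K) (hA : A ⊆ K) :
    Phi p a r q (J ∪ A) (J ∪ (K \ A)) =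
      (16 * (coefA p J) ^ 2 * (∏ i ∈ J, ∏ j ∈ K, ((p i - p j) / (p i + p j)) ^ 2)
        * ((∏ j ∈ J, a j) ^ 2 * ∏ j ∈ K, a j)
        * Real.exp (∑ i, (2 * Kv p r J i + Kv p r K i) * q i)
        * (pairProd K (fun i j => (p i + p j) ^ 2))⁻¹) * keyTerm K p A := by
  classical
  set B := K \ A with hB
  have hBK : B ⊆ K := Finset.sdiff_subset
  have hJA : Disjoint J A := Finset.disjoint_of_subset_right hA hJK
  have hJB : Disjoint J B := Finset.disjoint_of_subset_right hBK hJK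
  have hAB : Disjoint A B := Finset.disjoint_sdiff
  have hABK : A ∪ B = K := Finset.union_sdiff_of_subset hA
  -- a products
  have h_a : (∏ j ∈ J ∪ A, a j) * (∏ j ∈ J ∪ B, a j) = (∏ j ∈ J, a j) ^ 2 * ∏ j ∈ K, a j := by
    rw [Finset.prod_union hJA, Finset.prod_union hJB]
    rw [show (∏ j ∈ J, a j) * (∏ j ∈ A, a j) * ((∏ j ∈ J, a j) * (∏ j ∈ B, a j))
      = (∏ j ∈ J, a j) ^ 2 * ((∏ j ∈ A, a j) * (∏ j ∈ B, a j)) by ring,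
      ← Finset.prod_union hAB, hABK]
  -- coefA products
  have hsym : ∀ i j, ((p i - p j) / (p i + p j)) ^ 2 = ((p j - p i) / (p j + p i)) ^ 2 :=
    A2_symm
  have h_c : coefA p (J ∪ A) * coefA p (J ∪ B) =
      (coefA p J) ^ 2 * (coefA p A * coefA p B)
        * ∏ i ∈ J, ∏ j ∈ K, ((p i - p j) / (p i + p j)) ^ 2 := by
    unfold coefA
    rw [pairProd_union hsym hJA, pairProd_union hsym hJB]
    have hcross : (∏ i ∈ J, ∏ j ∈ A, ((p i - p j) / (p i + p j)) ^ 2)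
        * (∏ i ∈ J, ∏ j ∈ B, ((p i - p j) / (p i + p j)) ^ 2)
        = ∏ i ∈ J, ∏ j ∈ K, ((p i - p j) / (p i + p j)) ^ 2 := by
      rw [← Finset.prod_mul_distrib]
      refine Finset.prod_congr rfl fun i _ => ?_
      rw [← Finset.prod_union hAB, hABK]
    rw [← hcross]
    ring
  -- dispersion components
  have h_X : Kv p r (J ∪ A) 0 - Kv p r (J ∪ B) 0 = 2 * Ee K p A := by
    rw [Kv_union hJA, Kv_union hJB, Kv_zero_eq (S := A), Kv_zero_eq (S := B)]
    rw [show Kv p r J 0 + (∑ j ∈ A, 2 * p j) - (Kv p r J 0 + ∑ j ∈ B, 2 * p j)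
      = (∑ j ∈ A, 2 * p j) - (∑ j ∈ B, 2 * p j) by ring, hB,
      signed_split hA (fun j => 2 * p j), Ee, Finset.mul_sum]
    exact Finset.sum_congr rfl fun i _ => by ring
  have h_Y : Kv p r (J ∪ A) 3 - Kv p r (J ∪ B) 3 = 2 * Pp K p A := by
    rw [Kv_union hJA, Kv_union hJB, Kv_three_eq (S := A), Kv_three_eq (S := B)]
    rw [show Kv p r J 3 + (∑ j ∈ A, 2 * (p j) ^ 3) - (Kv p r J 3 + ∑ j ∈ B, 2 * (p j) ^ 3)
      = (∑ j ∈ A, 2 * (p j) ^ 3) - (∑ j ∈ B, 2 * (p j) ^ 3) by ring, hB,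
      signed_split hA (fun j => 2 * (p j) ^ 3), Pp, Finset.mul_sum]
    exact Finset.sum_congr rfl fun i _ => by ring
  -- exponential factor
  have h_exp : (∑ i, (Kv p r (J ∪ A) i + Kv p r (J ∪ B) i) * q i)
      = ∑ i, (2 * Kv p r J i + Kv p r K i) * q i := by
    refine Finset.sum_congr rfl fun i _ => ?_
    rw [Kv_union hJA, Kv_union hJB]
    have : Kv p r A i + Kv p r B i = Kv p r K i := by
      rw [Kv, Kv, Kv, ← Finset.sum_union hAB, hABK]
    rw [show Kv p r J i + Kv p r A i + (Kv p r J i + Kv p r B i)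
      = 2 * Kv p r J i + (Kv p r A i + Kv p r B i) by ring, this]
  -- the coefficient split
  have hPP := pairProd_plus_pos (p := p) hp K
  have h_split : coefA p A * coefA p B =
      pairProd K (fsq p A) * (pairProd K (fun i j => (p i + p j) ^ 2))⁻¹ := by
    rw [coefA_split hp hA, ← hB]
    field_simp
  unfold Phi cS
  rw [h_exp, h_X, h_Y]
  rw [show coefA p (J ∪ A) * (∏ j ∈ J ∪ A, a j) * (coefA p (J ∪ B) * ∏ j ∈ J ∪ B, a j)
    = (coefA p (J ∪ A) * coefA p (J ∪ B)) * ((∏ j ∈ J ∪ A, a j) * (∏ j ∈ J ∪ B, a j)) by ring,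
    h_c, h_a, h_split, keyTerm]
  ring

lemma fiber_sum_eq_zero (hp : ∀ j, 0 < p j) {J K : Finset (Fin N)} (hJK : Disjoint J K) :
    ∑ A ∈ K.powerset, Phi p a r q (J ∪ A) (J ∪ (K \ A)) = 0 := by
  rw [Finset.sum_congr rfl fun A hA =>
    Phi_fiber_term (q := q) (a := a) (r := r) hp hJK (Finset.mem_powerset.mp hA),
    ← Finset.mul_sum]
  rw [show (∑ A ∈ K.powerset, keyTerm K p A) = keyLHS K p from rfl, keyLHS_eq_zero, mul_zero]

theorem sum_Phi_eq_zero (hp : ∀ j, 0 < p j) :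
    ∑ ST : Finset (Fin N) × Finset (Fin N), Phi p a r q ST.1 ST.2 = 0 := by
  classical
  rw [← Finset.sum_fiberwise Finset.univ
    (fun ST : Finset (Fin N) × Finset (Fin N) => (ST.1 ∩ ST.2, (ST.1 \ ST.2) ∪ (ST.2 \ ST.1)))
    (fun ST => Phi p a r q ST.1 ST.2)]
  apply Finset.sum_eq_zero
  rintro ⟨J, K⟩ -
  by_cases hJK : Disjoint J K
  · rw [show (∑ ST ∈ Finset.univ.filter
        (fun ST : Finset (Fin N) × Finset (Fin N) =>
          (ST.1 ∩ ST.2, (ST.1 \ ST.2) ∪ (ST.2 \ ST.1)) = (J, K)), Phi p a r q ST.1 ST.2)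
        = ∑ A ∈ K.powerset, Phi p a r q (J ∪ A) (J ∪ (K \ A)) from ?_,
      fiber_sum_eq_zero hp hJK]
    apply Finset.sum_nbij' (i := fun ST => ST.1 \ ST.2)
      (j := fun A => (J ∪ A, J ∪ (K \ A)))
    · rintro ⟨S, T⟩ hST
      rw [Finset.mem_filter, Prod.mk.injEq] at hST
      obtain ⟨-, hJ, hK⟩ := hST
      rw [Finset.mem_powerset, ← hK]
      exact Finset.subset_union_left
    · intro A hA
      have hAK : A ⊆ K := Finset.mem_powerset.mp hA
      rw [Finset.mem_filter, Prod.mk.injEq]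
      refine ⟨Finset.mem_univ _, ?_, ?_⟩
      · ext t
        have h1 : t ∈ A → t ∈ K := fun h => hAK h
        have h2 : t ∈ J → t ∉ K := fun h => Finset.disjoint_left.mp hJK h
        simp only [Finset.mem_inter, Finset.mem_union, Finset.mem_sdiff]
        tauto
      · ext t
        have h1 : t ∈ A → t ∈ K := fun h => hAK h
        have h2 : t ∈ J → t ∉ K := fun h => Finset.disjoint_left.mp hJK h
        simp only [Finset.mem_union, Finset.mem_sdiff]
        tauto
    · rintro ⟨S, T⟩ hST
      rw [Finset.mem_filter, Prod.mk.injEq] at hST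
      obtain ⟨-, hJ, hK⟩ := hST
      rw [Prod.mk.injEq]
      constructor
      · ext t
        have h1 : t ∈ S ∩ T → t ∈ J := fun h => hJ ▸ h
        have h2 : t ∈ J → t ∈ S ∩ T := fun h => hJ ▸ h
        simp only [Finset.mem_inter] at h1 h2
        simp only [Finset.mem_union, Finset.mem_sdiff]
        tauto
      · ext t
        have h1 : t ∈ S ∩ T → t ∈ J := fun h => hJ ▸ h
        have h2 : t ∈ J → t ∈ S ∩ T := fun h => hJ ▸ h
        have h3 : t ∈ (S \ T) ∪ (T \ S) → t ∈ K := fun h => hK ▸ h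
        have h4 : t ∈ K → t ∈ (S \ T) ∪ (T \ S) := fun h => hK ▸ h
        simp only [Finset.mem_inter] at h1 h2
        simp only [Finset.mem_union, Finset.mem_sdiff] at h3 h4 ⊢
        tauto
    · intro A hA
      have hAK : A ⊆ K := Finset.mem_powerset.mp hA
      ext t
      have h1 : t ∈ A → t ∈ K := fun h => hAK h
      have h2 : t ∈ J → t ∉ K := fun h => Finset.disjoint_left.mp hJK h
      simp only [Finset.mem_union, Finset.mem_sdiff]
      tauto
    · rintro ⟨S, T⟩ hST
      rw [Finset.mem_filter, Prod.mk.injEq] at hST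
      obtain ⟨-, hJ, hK⟩ := hST
      have e1 : J ∪ (S \ T) = S := by
        ext t
        have h1 : t ∈ S ∩ T → t ∈ J := fun h => hJ ▸ h
        have h2 : t ∈ J → t ∈ S ∩ T := fun h => hJ ▸ h
        simp only [Finset.mem_inter] at h1 h2
        simp only [Finset.mem_union, Finset.mem_sdiff]
        tauto
      have e2 : J ∪ (K \ (S \ T)) = T := by
        ext t
        have h1 : t ∈ S ∩ T → t ∈ J := fun h => hJ ▸ h
        have h2 : t ∈ J → t ∈ S ∩ T := fun h => hJ ▸ h
        have h3 : t ∈ (S \ T) ∪ (T \ S) → t ∈ K := fun h => hK ▸ h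
        have h4 : t ∈ K → t ∈ (S \ T) ∪ (T \ S) := fun h => hK ▸ h
        simp only [Finset.mem_inter] at h1 h2
        simp only [Finset.mem_union, Finset.mem_sdiff] at h3 h4 ⊢
        tauto
      rw [e1, e2]
  · have hempty : Finset.univ.filter
        (fun ST : Finset (Fin N) × Finset (Fin N) =>
          (ST.1 ∩ ST.2, (ST.1 \ ST.2) ∪ (ST.2 \ ST.1)) = (J, K)) = ∅ := by
      rw [Finset.filter_eq_empty_iff]
      rintro ⟨S, T⟩ -
      rw [Prod.mk.injEq]
      rintro ⟨hJ, hK⟩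
      apply hJK
      rw [← hJ, ← hK, Finset.disjoint_left]
      intro t ht
      rw [Finset.mem_inter] at ht
      simp only [Finset.mem_union, Finset.mem_sdiff]
      tauto
    rw [hempty, Finset.sum_empty]

end FiberSum

end KdVAux

/-- the `N`-soliton tau function satisfies the bilinear KdV equation
`(D_x⁴ − 4 D_x D_{t'}) τ_N·τ_N = 0`. -/
theorem tauN_satisfies_bilinear_KdV (N : ℕ) (p a r : Fin N → ℝ)
    (hp : ∀ j, 0 < p j) :
    ∀ q : Fin 4 → ℝ,
      hirotaD [0, 0, 0, 0] (tauN p a r) (tauN p a r) q -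
        4 * hirotaD [0, 3] (tauN p a r) (tauN p a r) q = 0 := by
  intro q
  rw [KdVAux.hirotaD_tauN, KdVAux.hirotaD_tauN, Finset.mul_sum, ← Finset.sum_sub_distrib]
  have h := KdVAux.sum_Phi_eq_zero (p := p) (a := a) (r := r) (q := q) hp
  rw [← h]
  refine Finset.sum_congr rfl fun ST _ => ?_
  simp only [List.map_cons, List.map_nil, List.prod_cons, List.prod_nil]
  unfold KdVAux.Phi
  ring
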